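/- Consider one clique consisting of n clusters each of size 2, say cluster G_i = {t_i', t_i''} for i = 1..n, with any two facts in different clusters conflicting. The canonical disjunctive database representing the repairs consists of the 2^n disjunctions { t_1 ∨ ... ∨ t_n : t_i ∈ G_i }, and its size (total number of fact occurrences) is n·2^n. -/

import Mathlib

/-!
A set of facts is a model of the database of all transversals `{(i, g i) | i}` exactly when it
contains a whole cluster, since otherwise choosing for each `i` a fact of the `i`-th cluster
outside `M` gives a transversal missed by `M`. So the minimal models are the clusters, which are
also the repairs. For canonicity, let `D'` have the same minimal models and suppose the
transversal of `g` is not in `D'`. Every disjunction of `D'` meets every cluster, so none lies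
inside the transversal of `g`; hence the complement of that transversal is a model of `D'`. It
contains a minimal model, i.e. a cluster, but every cluster meets the transversal of `g`.
-/

variable {F : Type*} [DecidableEq F]

/-- M is a model of the disjunctive database D: it meets every disjunction. -/
def IsModel (D : Finset (Finset F)) (M : Finset F) : Prop :=
  ∀ d ∈ D, ∃ t ∈ d, t ∈ M

/-- M is a minimal model of D. -/
def IsMinModel (D : Finset (Finset F)) (M : Finset F) : Prop :=
  IsModel D M ∧ ∀ M' ⊂ M, ¬ IsModel D M'

/-- reduction removes every disjunction properly containing another disjunction of D. -/
def reduction (D : Finset (Finset F)) : Finset (Finset F) :=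
  D.filter (fun d => ∀ d' ∈ D, ¬ d' ⊂ d)

/-- S is conflict-free w.r.t. a binary conflict relation G. -/
def ConflictFree (G : F → F → Prop) (S : Finset F) : Prop :=
  ∀ a ∈ S, ∀ b ∈ S, ¬ G a b

/-- S is a repair of V w.r.t. conflict relation G: a maximal conflict-free subset of V. -/
def IsRepairC (V : Finset F) (G : F → F → Prop) (S : Finset F) : Prop :=
  S ⊆ V ∧ ConflictFree G S ∧ ∀ S', S ⊂ S' → S' ⊆ V → ¬ ConflictFree G S'

open Finset

lemma isMinModel_iff_minimal {β : Type*} {D : Finset (Finset β)} {M : Finset β} :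
    IsMinModel D M ↔ Minimal (IsModel D) M :=
  minimal_iff_forall_lt.symm

lemma IsModel.exists_isMinModel_subset {β : Type*} {D : Finset (Finset β)} {M : Finset β}
    (h : IsModel D M) : ∃ M' ⊆ M, IsMinModel D M' := by
  obtain ⟨M', hM', hmin⟩ := exists_minimal_le_of_wellFoundedLT (IsModel D) M h
  exact ⟨M', hM', isMinModel_iff_minimal.2 hmin⟩

section Clusters

variable {ι α : Type*}

def cluster [Fintype α] (i : ι) : Finset (ι × α) :=
  {i} ×ˢ univ

lemma mem_cluster [Fintype α] {i : ι} {t : ι × α} : t ∈ cluster i ↔ t.1 = i := by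
  simp only [cluster, mem_product, mem_singleton, mem_univ, and_true]

lemma exists_subset_cluster_of_conflictFree [Fintype α] [Nonempty ι] {S : Finset (ι × α)}
    (h : ConflictFree (fun a b => a.1 ≠ b.1) S) : ∃ i, S ⊆ cluster i := by
  obtain rfl | ⟨t, ht⟩ := S.eq_empty_or_nonempty
  · exact ⟨Classical.arbitrary ι, empty_subset _⟩
  · exact ⟨t.1, fun a ha => mem_cluster.2 (not_not.1 (h a ha t ht))⟩

lemma conflictFree_cluster [Fintype α] (i : ι) :
    ConflictFree (fun a b => a.1 ≠ b.1) (cluster (α := α) i) :=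
  fun _ ha _ hb => not_not.2 ((mem_cluster.1 ha).trans (mem_cluster.1 hb).symm)

lemma isRepairC_iff [Fintype ι] [Fintype α] [Nonempty ι] {M : Finset (ι × α)} :
    IsRepairC univ (fun a b => a.1 ≠ b.1) M ↔ ∃ i, M = cluster i := by
  constructor
  · rintro ⟨-, hcf, hmax⟩
    obtain ⟨i, hi⟩ := exists_subset_cluster_of_conflictFree hcf
    exact ⟨i, eq_of_subset_of_not_ssubset hi fun hlt =>
      hmax _ hlt (subset_univ _) (conflictFree_cluster i)⟩
  · rintro ⟨i, rfl⟩
    refine ⟨subset_univ _, conflictFree_cluster i, fun S hS _ hcf => ?_⟩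
    obtain ⟨t, htS, ht⟩ := exists_of_ssubset hS
    have hit : (i, t.2) ∈ S := hS.subset (mem_cluster.2 rfl)
    exact ht (mem_cluster.2 (not_not.1 (hcf t htS _ hit)))

variable [Fintype ι] [DecidableEq ι] [DecidableEq α]

/-- The disjunction `t_1 ∨ ⋯ ∨ t_n` picking the fact `(i, g i)` from the `i`-th cluster. -/
def transversal (g : ι → α) : Finset (ι × α) :=
  univ.image fun i => (i, g i)

lemma mem_transversal {g : ι → α} {t : ι × α} : t ∈ transversal g ↔ g t.1 = t.2 := by
  simp only [transversal, mem_image, mem_univ, true_and]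
  exact ⟨by rintro ⟨i, rfl⟩; rfl, fun h => ⟨t.1, Prod.ext rfl h⟩⟩

lemma transversal_injective : Function.Injective (transversal : (ι → α) → Finset (ι × α)) :=
  fun g₁ g₂ h => funext fun i =>
    (mem_transversal.1 (h ▸ mem_transversal.2 rfl : (i, g₁ i) ∈ transversal g₂)).symm

lemma card_transversal (g : ι → α) : #(transversal g) = Fintype.card ι := by
  rw [transversal, card_image_of_injective _ fun _ _ h => (Prod.ext_iff.1 h).1, card_univ]

variable [Fintype α]

variable (ι α) in
def transversals : Finset (Finset (ι × α)) :=
  univ.image transversal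

lemma sum_card_transversals :
    ∑ d ∈ transversals ι α, #d = Fintype.card ι * Fintype.card α ^ Fintype.card ι := by
  rw [transversals, sum_image fun g₁ _ g₂ _ h => transversal_injective h]
  simp only [card_transversal, sum_const, card_univ, Fintype.card_fun, smul_eq_mul, mul_comm]

lemma isModel_transversals_iff {M : Finset (ι × α)} :
    IsModel (transversals ι α) M ↔ ∃ i, cluster i ⊆ M := by
  constructor
  · intro h
    by_contra! hM
    have hout : ∀ i, ∃ a, (i, a) ∉ M := fun i => by
      obtain ⟨t, ht, htM⟩ := not_subset.1 (hM i)
      exact ⟨t.2, mem_cluster.1 ht ▸ htM⟩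
    choose g hg using hout
    obtain ⟨t, ht, htM⟩ := h _ (mem_image_of_mem transversal (mem_univ g))
    have ht' : t = (t.1, g t.1) := Prod.ext rfl (mem_transversal.1 ht).symm
    exact hg t.1 (ht' ▸ htM)
  · rintro ⟨i, hi⟩ d hd
    obtain ⟨g, -, rfl⟩ := mem_image.1 hd
    exact ⟨(i, g i), mem_transversal.2 rfl, hi (mem_cluster.2 rfl)⟩

lemma isMinModel_transversals_iff {M : Finset (ι × α)} :
    IsMinModel (transversals ι α) M ↔ ∃ i, M = cluster i := by
  constructor
  · rintro ⟨hM, hmin⟩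
    obtain ⟨i, hi⟩ := isModel_transversals_iff.1 hM
    refine ⟨i, (eq_of_subset_of_not_ssubset hi fun hlt => ?_).symm⟩
    exact hmin _ hlt (isModel_transversals_iff.2 ⟨i, subset_rfl⟩)
  · rintro ⟨i, rfl⟩
    refine ⟨isModel_transversals_iff.2 ⟨i, subset_rfl⟩, fun M' hM' hmodel => ?_⟩
    obtain ⟨j, hj⟩ := isModel_transversals_iff.1 hmodel
    obtain ⟨t, ht, htM'⟩ := exists_of_ssubset hM'
    have hji : j = i := mem_cluster.1 (hM'.subset (hj (mem_cluster.2 (rfl : (j, t.2).1 = j))))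
    exact htM' (hj (mem_cluster.2 ((mem_cluster.1 ht).trans hji.symm)))

lemma eq_transversal_of_subset {d : Finset (ι × α)} {g : ι → α} (hd : d ⊆ transversal g)
    (hmeets : ∀ i, ∃ t ∈ d, t ∈ cluster i) : d = transversal g := by
  refine hd.antisymm fun t ht => ?_
  obtain ⟨u, hu, hut⟩ := hmeets t.1
  have hu1 : u.1 = t.1 := mem_cluster.1 hut
  obtain rfl : u = t := Prod.ext hu1 <| by
    rw [← mem_transversal.1 (hd hu), ← mem_transversal.1 ht, hu1]
  exact hu

lemma transversals_subset_of_forall_isMinModel_iff {D : Finset (Finset (ι × α))}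
    (h : ∀ M, IsMinModel D M ↔ IsMinModel (transversals ι α) M) : transversals ι α ⊆ D := by
  intro d hd
  obtain ⟨g, -, rfl⟩ := mem_image.1 hd
  by_contra hg
  have hcompl : IsModel D (univ \ transversal g) := by
    intro d' hd'
    have hmeets : ∀ i, ∃ t ∈ d', t ∈ cluster i := fun i =>
      ((h _).2 (isMinModel_transversals_iff.2 ⟨i, rfl⟩)).1 d' hd'
    obtain ⟨t, ht, htg⟩ := not_subset.1 fun hsub => hg (eq_transversal_of_subset hsub hmeets ▸ hd')
    exact ⟨t, ht, mem_sdiff.2 ⟨mem_univ t, htg⟩⟩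
  obtain ⟨M, hM, hmin⟩ := hcompl.exists_isMinModel_subset
  obtain ⟨i, rfl⟩ := isMinModel_transversals_iff.1 ((h M).1 hmin)
  exact (mem_sdiff.1 (hM (mem_cluster.2 (rfl : (i, g i).1 = i)))).2 (mem_transversal.2 rfl)

end Clusters

theorem stmt11 (n : ℕ) (hn : 0 < n)
    (D : Finset (Finset (Fin n × Bool)))
    (hD : D = Finset.univ.image
      (fun g : Fin n → Bool => Finset.univ.image (fun i : Fin n => (i, g i)))) :
    (∀ M : Finset (Fin n × Bool),
      IsMinModel D M ↔ IsRepairC Finset.univ (fun a b => a.1 ≠ b.1) M)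
    ∧ (∀ D' : Finset (Finset (Fin n × Bool)), (∀ d ∈ D', d.Nonempty) →
        (∀ M : Finset (Fin n × Bool), IsMinModel D' M ↔ IsMinModel D M) → D ⊆ D')
    ∧ (∑ d ∈ D, d.card) = n * 2 ^ n := by
  obtain rfl : D = transversals (Fin n) Bool := hD
  have : Nonempty (Fin n) := ⟨⟨0, hn⟩⟩
  refine ⟨fun M => isMinModel_transversals_iff.trans isRepairC_iff.symm,
    fun D' _ h => transversals_subset_of_forall_isMinModel_iff h, ?_⟩
  simpa using sum_card_transversals (ι := Fin n) (α := Bool)
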